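/- arXiv:2104.08607 — 2 statements merged into one kernel-verified Lean document; each statement's English description precedes it below -/
import Mathlib

section
/- Let $K_1, K_2 > 0$ and let $(v_n)$ be a sequence of continuous piecewise affine functions on $[0,1]$, where $v_n$ is affine on each interval $[i/n,(i+1)/n]$, $i=0,\dots,n-1$, with $v_n(0)=0$. Suppose that $\sup_n \sum_{i=0}^{n-1} \min\{\tfrac{1}{n} K_1 (n(v_n^{i+1}-v_n^i))^2, K_2\} < \infty$ and that $n(v_n^{i+1}-v_n^i) \ge -d\sqrt{n}$ for all $i$ and $n$, where $d>0$ is a fixed constant and $v_n^i := v_n(i/n)$. Assume further $v_n(1)=\gamma_n$ with $(\gamma_n)$ bounded. Then $\sup_n \|v_n\|_{W^{1,1}(0,1)} < \infty$. -/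
open Finset

/-- Step 1 of the compactness theorem: a sequence of piecewise affine functions
(encoded by their nodal values `v n i = v_n(i/n)`), with `v_n(0)=0`, bounded boundary
data `v_n(1)=γ_n`, an equibounded truncated-quadratic energy, and the one-sided slope
bound `n (v_n^{i+1}-v_n^i) ≥ -d √n`, is bounded in `W^{1,1}(0,1)`: the total variations
`∑ |v_n^{i+1}-v_n^i|` (which control the `W^{1,1}` norms of the interpolants, since
`v_n(0)=0`) are equibounded. -/
theorem stmt_6 (K1 K2 d G E : ℝ) (hK1 : 0 < K1) (hK2 : 0 < K2) (hd : 0 < d) (hG : 0 ≤ G)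
    (v : ℕ → ℕ → ℝ) (γ : ℕ → ℝ)
    (h0 : ∀ n, v n 0 = 0)
    (hbc : ∀ n : ℕ, 1 ≤ n → v n n = γ n)
    (hγ : ∀ n, |γ n| ≤ G)
    (henergy : ∀ n : ℕ, 1 ≤ n →
      (∑ i ∈ Finset.range n,
        min ((1 / (n : ℝ)) * K1 * ((n : ℝ) * (v n (i + 1) - v n i)) ^ 2) K2) ≤ E)
    (hslope : ∀ n : ℕ, 1 ≤ n → ∀ i < n,
      (n : ℝ) * (v n (i + 1) - v n i) ≥ -d * Real.sqrt n) :
    ∃ C : ℝ, ∀ n : ℕ, 1 ≤ n → (∑ i ∈ Finset.range n, |v n (i + 1) - v n i|) ≤ C := by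
  refine ⟨G + 2 * (Real.sqrt (E / K1) + d * (E / K2)), ?_⟩
  have hE : 0 ≤ E := by
    refine le_trans ?_ (henergy 1 le_rfl)
    exact Finset.sum_nonneg fun i _ => le_min (by positivity) hK2.le
  intro n hn
  have hnpos : (0:ℝ) < n := by exact_mod_cast hn
  set δ : ℕ → ℝ := fun i => v n (i + 1) - v n i with hδ
  have hsum : ∑ i ∈ Finset.range n, δ i = γ n := by
    have := Finset.sum_range_sub (fun i => v n i) n
    simp only [hδ]
    rw [this, h0, hbc n hn]; ring
  have habs : ∀ i, |δ i| = δ i + 2 * max (-(δ i)) 0 := by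
    intro i; rcases le_or_gt 0 (δ i) with h | h
    · rw [abs_of_nonneg h, max_eq_right (by linarith)]; ring
    · rw [abs_of_neg h, max_eq_left (by linarith)]; ring
  have hsplit : ∑ i ∈ Finset.range n, |δ i|
      = γ n + 2 * ∑ i ∈ Finset.range n, max (-(δ i)) 0 := by
    calc ∑ i ∈ Finset.range n, |δ i|
        = ∑ i ∈ Finset.range n, (δ i + 2 * max (-(δ i)) 0) := by
          exact Finset.sum_congr rfl fun i _ => habs i
      _ = (∑ i ∈ Finset.range n, δ i) + 2 * ∑ i ∈ Finset.range n, max (-(δ i)) 0 := by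
          rw [Finset.sum_add_distrib, Finset.mul_sum]
      _ = γ n + 2 * ∑ i ∈ Finset.range n, max (-(δ i)) 0 := by rw [hsum]
  set P : ℕ → ℝ := fun i => (1 / (n:ℝ)) * K1 * ((n:ℝ) * δ i) ^ 2 with hP
  set s1 := (Finset.range n).filter (fun i => P i ≤ K2) with hs1
  set s2 := (Finset.range n).filter (fun i => ¬ P i ≤ K2) with hs2
  have hPnn : ∀ i, 0 ≤ P i := fun i => by positivity
  have hmins : (∑ i ∈ s1, P i) + (∑ i ∈ s2, K2)
      = ∑ i ∈ Finset.range n, min (P i) K2 := by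
    rw [← Finset.sum_filter_add_sum_filter_not (Finset.range n) (fun i => P i ≤ K2)]
    congr 1
    · exact Finset.sum_congr rfl fun i hi =>
        (min_eq_left (Finset.mem_filter.mp hi).2).symm
    · exact Finset.sum_congr rfl fun i hi =>
        (min_eq_right (le_of_not_ge (Finset.mem_filter.mp hi).2)).symm
  have hEn := henergy n hn
  have hmE : ∑ i ∈ Finset.range n, min (P i) K2 ≤ E := hEn
  have hs1E : ∑ i ∈ s1, P i ≤ E := by
    have : 0 ≤ ∑ i ∈ s2, K2 := Finset.sum_nonneg fun _ _ => hK2.le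
    linarith [hmins ▸ hmE]
  have hs2E : ∑ i ∈ s2, K2 ≤ E := by
    have : 0 ≤ ∑ i ∈ s1, P i := Finset.sum_nonneg fun i _ => hPnn i
    linarith [hmins ▸ hmE]
  have hcard2 : (s2.card : ℝ) ≤ E / K2 := by
    rw [le_div_iff₀ hK2]
    calc (s2.card : ℝ) * K2 = ∑ i ∈ s2, K2 := by
          rw [Finset.sum_const, nsmul_eq_mul]
      _ ≤ E := hs2E
  -- negative part bound on s2
  have hneg : ∀ i < n, max (-(δ i)) 0 ≤ d := by
    intro i hi
    have hs := hslope n hn i hi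
    have hsqrt : Real.sqrt n ≤ n := by
      have h1 : (1:ℝ) ≤ Real.sqrt n := by
        rw [show (1:ℝ) = Real.sqrt 1 from Real.sqrt_one.symm]
        exact Real.sqrt_le_sqrt (by exact_mod_cast hn)
      have h2 : Real.sqrt n * Real.sqrt n = n := Real.mul_self_sqrt hnpos.le
      nlinarith
    have : -(δ i) ≤ d := by
      have : -(d * (n:ℝ)) ≤ (n:ℝ) * δ i := by
        calc -(d * (n:ℝ)) ≤ -d * Real.sqrt n := by nlinarith [Real.sqrt_nonneg (n:ℝ)]
          _ ≤ (n:ℝ) * δ i := hs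
      nlinarith
    exact max_le this hd.le
  have hnegs2 : ∑ i ∈ s2, max (-(δ i)) 0 ≤ d * (E / K2) := by
    calc ∑ i ∈ s2, max (-(δ i)) 0 ≤ ∑ i ∈ s2, d :=
          Finset.sum_le_sum fun i hi =>
            hneg i (Finset.mem_range.mp (Finset.mem_filter.mp hi).1)
      _ = (s2.card : ℝ) * d := by rw [Finset.sum_const, nsmul_eq_mul]
      _ ≤ (E / K2) * d := mul_le_mul_of_nonneg_right hcard2 hd.le
      _ = d * (E / K2) := mul_comm _ _
  -- elastic part via Cauchy-Schwarz
  have hsq : ∑ i ∈ s1, (δ i) ^ 2 ≤ E / (K1 * n) := by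
    rw [le_div_iff₀ (by positivity)]
    calc (∑ i ∈ s1, (δ i) ^ 2) * (K1 * n) = ∑ i ∈ s1, P i := by
          rw [Finset.sum_mul]
          refine Finset.sum_congr rfl fun i _ => ?_
          simp only [hP]; field_simp
      _ ≤ E := hs1E
  have habs1 : ∑ i ∈ s1, |δ i| ≤ Real.sqrt (E / K1) := by
    have hCS : (∑ i ∈ s1, |δ i|) ^ 2 ≤ (s1.card : ℝ) * ∑ i ∈ s1, (δ i) ^ 2 := by
      have := Finset.sum_mul_sq_le_sq_mul_sq s1 (fun _ => (1:ℝ)) (fun i => |δ i|)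
      simpa [sq_abs] using this
    have hcard1 : (s1.card : ℝ) ≤ n := by
      have h := Finset.card_le_card (Finset.filter_subset (fun i => P i ≤ K2) (Finset.range n))
      rw [Finset.card_range] at h
      exact_mod_cast h
    have h2 : (∑ i ∈ s1, |δ i|) ^ 2 ≤ E / K1 := by
      calc (∑ i ∈ s1, |δ i|) ^ 2 ≤ (s1.card : ℝ) * ∑ i ∈ s1, (δ i) ^ 2 := hCS
        _ ≤ (n:ℝ) * (E / (K1 * n)) := by
            refine mul_le_mul hcard1 hsq (Finset.sum_nonneg fun i _ => sq_nonneg _) hnpos.le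
        _ = E / K1 := by field_simp
    have hnn : 0 ≤ ∑ i ∈ s1, |δ i| := Finset.sum_nonneg fun i _ => abs_nonneg _
    calc ∑ i ∈ s1, |δ i| = Real.sqrt ((∑ i ∈ s1, |δ i|) ^ 2) := (Real.sqrt_sq hnn).symm
      _ ≤ Real.sqrt (E / K1) := Real.sqrt_le_sqrt h2
  have hnegs1 : ∑ i ∈ s1, max (-(δ i)) 0 ≤ Real.sqrt (E / K1) := by
    refine le_trans (Finset.sum_le_sum fun i _ => ?_) habs1
    exact max_le (neg_le_abs _) (abs_nonneg _)
  have hnegtot : ∑ i ∈ Finset.range n, max (-(δ i)) 0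
      ≤ Real.sqrt (E / K1) + d * (E / K2) := by
    rw [← Finset.sum_filter_add_sum_filter_not (Finset.range n) (fun i => P i ≤ K2)]
    exact add_le_add hnegs1 hnegs2
  calc ∑ i ∈ Finset.range n, |δ i|
      = γ n + 2 * ∑ i ∈ Finset.range n, max (-(δ i)) 0 := hsplit
    _ ≤ G + 2 * (Real.sqrt (E / K1) + d * (E / K2)) := by
        have := hγ n
        have h1 : γ n ≤ G := le_trans (le_abs_self _) this
        linarith [hnegtot]
end

section
/- Let $(\Omega,\mathcal{F},\mathbb{P})$ be a probability space with an ergodic measure-preserving $\mathbb{Z}$-action $(\tau_i)_{i\in\mathbb{Z}}$, and let $f:\Omega\to\mathbb{R}$ be integrable. Then there exists $\Omega'\subset\Omega$ with $\mathbb{P}(\Omega')=1$ such that for every $\omega\in\Omega'$, every $x\in\mathbb{R}$, every rational $\epsilon>0$, and every rational $k$, $\lim_{n\to\infty} \frac{1}{2\epsilon n} \#\{ i\in\mathbb{Z} : |i/n - x|<\epsilon,\ f(\tau_i\omega)\le k\} = \mathbb{P}(f\le k)$. -/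
open MeasureTheory Filter Set Topology

/-- If `v n - u (n+1) → 0` and `u` is bounded, then `limsup v = limsup u`. -/
lemma limsup_eq_of_tendsto_sub (u v : ℕ → ℝ) (hub : ∀ n, |u n| ≤ 1)
    (h : Tendsto (fun n => v n - u (n + 1)) atTop (𝓝 0)) :
    limsup v atTop = limsup u atTop := by
  have hu_le : IsBoundedUnder (· ≤ ·) atTop u :=
    isBoundedUnder_of ⟨1, fun n => (abs_le.1 (hub n)).2⟩
  have hu_ge : IsBoundedUnder (· ≥ ·) atTop u :=
    isBoundedUnder_of ⟨-1, fun n => (abs_le.1 (hub n)).1⟩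
  have hu_co : IsCoboundedUnder (· ≤ ·) atTop u := hu_ge.isCoboundedUnder_le
  have hv_small : ∀ᶠ n in atTop, |v n - u (n + 1)| < 1 := by
    have := h.eventually (eventually_abs_sub_lt 0 one_pos)
    simpa using this
  have hv_le : IsBoundedUnder (· ≤ ·) atTop v := by
    apply IsBoundedUnder.mono_le (isBoundedUnder_of ⟨2, fun (_ : ℕ) => le_refl (2:ℝ)⟩)
    filter_upwards [hv_small] with n hn
    have := (abs_lt.1 hn).2
    have h2 := (abs_le.1 (hub (n + 1))).2
    linarith
  have hv_ge : IsBoundedUnder (· ≥ ·) atTop v := by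
    apply IsBoundedUnder.mono_ge (isBoundedUnder_of ⟨-2, fun (_ : ℕ) => le_refl (-2:ℝ)⟩)
    filter_upwards [hv_small] with n hn
    have := (abs_lt.1 hn).1
    have h2 := (abs_le.1 (hub (n + 1))).1
    linarith
  have hv_co : IsCoboundedUnder (· ≤ ·) atTop v := hv_ge.isCoboundedUnder_le
  have hu_co_ge : IsCoboundedUnder (· ≥ ·) atTop u := hu_le.isCoboundedUnder_ge
  have key : ∀ ε : ℝ, 0 < ε →
      limsup v atTop ≤ limsup u atTop + ε ∧ limsup u atTop ≤ limsup v atTop + ε := by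
    intro ε hε
    have hsm : ∀ᶠ n in atTop, |v n - u (n + 1)| < ε := by
      have := h.eventually (eventually_abs_sub_lt 0 hε)
      simpa using this
    constructor
    · have h1 : limsup v atTop ≤ limsup (fun n => u (n + 1) + ε) atTop := by
        refine limsup_le_limsup ?_ hv_co ?_
        · filter_upwards [hsm] with n hn
          have := (abs_lt.1 hn).2; linarith
        · exact isBoundedUnder_of ⟨1 + ε, fun n => by
            have := (abs_le.1 (hub (n + 1))).2; linarith⟩
      have h2 : limsup (fun n => u (n + 1) + ε) atTop = limsup (fun n => u n + ε) atTop :=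
        limsup_nat_add (fun n => u n + ε) 1
      have h3 : limsup (fun n => u n + ε) atTop = limsup u atTop + ε :=
        limsup_add_const atTop u ε hu_le hu_co
      rw [h2, h3] at h1; exact h1
    · have h0 : limsup u atTop = limsup (fun n => u (n + 1)) atTop :=
        (limsup_nat_add u 1).symm
      have h1 : limsup (fun n => u (n + 1)) atTop ≤ limsup (fun n => v n + ε) atTop := by
        refine limsup_le_limsup ?_ ?_ ?_
        · filter_upwards [hsm] with n hn
          have := (abs_lt.1 hn).1; linarith
        · exact IsBoundedUnder.isCoboundedUnder_le
            (isBoundedUnder_of ⟨-1, fun n => (abs_le.1 (hub (n + 1))).1⟩)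
        · obtain ⟨b, hb⟩ := hv_le
          refine ⟨b + ε, eventually_map.2 ?_⟩
          filter_upwards [eventually_map.1 hb] with n hn
          exact add_le_add_left hn ε
      have h3 : limsup (fun n => v n + ε) atTop = limsup v atTop + ε :=
        limsup_add_const atTop v ε hv_le hv_co
      rw [h0]; rw [h3] at h1; exact h1
  apply le_antisymm
  · exact le_of_forall_pos_le_add fun ε hε => (key ε hε).1
  · exact le_of_forall_pos_le_add fun ε hε => (key ε hε).2

lemma sublinear_comp (ψ : ℕ → ℝ) (hψ : Tendsto (fun m => ψ m / m) atTop (𝓝 0))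
    (b : ℕ → ℕ) (C : ℝ) (hb : ∀ᶠ n in atTop, (b n : ℝ) ≤ C * n) :
    Tendsto (fun n => ψ (b n) / n) atTop (𝓝 0) := by
  rw [Metric.tendsto_atTop] at hψ ⊢
  intro ε hε
  set C' : ℝ := max C 1 with hC'
  have hC'pos : 0 < C' := lt_of_lt_of_le one_pos (le_max_right _ _)
  have hε2 : 0 < ε / (2 * C') := by positivity
  obtain ⟨M, hM⟩ := hψ (ε / (2 * C')) hε2
  set K : ℝ := ∑ m ∈ Finset.range (M + 1), |ψ m| with hK
  have hKb : ∀ m ≤ M, |ψ m| ≤ K := by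
    intro m hm
    exact Finset.single_le_sum (fun i _ => abs_nonneg (ψ i))
      (Finset.mem_range.2 (Nat.lt_succ_of_le hm))
  obtain ⟨N₁, hN₁⟩ := eventually_atTop.1 hb
  have hKn : Tendsto (fun n : ℕ => K / n) atTop (𝓝 0) :=
    tendsto_const_div_atTop_nhds_zero_nat K
  obtain ⟨N₂, hN₂⟩ := (Metric.tendsto_atTop.1 hKn) (ε / 2) (by positivity)
  refine ⟨max (max N₁ N₂) 1, fun n hn => ?_⟩
  have hn1 : 1 ≤ n := le_trans (le_max_right _ _) hn
  have hnN₁ : N₁ ≤ n := le_trans (le_trans (le_max_left _ _) (le_max_left _ _)) hn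
  have hnN₂ : N₂ ≤ n := le_trans (le_trans (le_max_right _ _) (le_max_left _ _)) hn
  have hnpos : (0:ℝ) < n := by exact_mod_cast hn1
  have habs : dist (ψ (b n) / n) 0 = |ψ (b n)| / n := by
    rw [Real.dist_eq, sub_zero, abs_div, abs_of_pos hnpos]
  rw [habs]
  rcases le_or_gt (b n) M with hbn | hbn
  · have h1 : |ψ (b n)| / n ≤ K / n := by
      exact div_le_div_of_nonneg_right (hKb _ hbn) hnpos.le
    have h2 := hN₂ n hnN₂
    rw [Real.dist_eq, sub_zero, abs_of_nonneg (by positivity : (0:ℝ) ≤ K / n)] at h2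
    linarith
  · have hbpos : (0:ℝ) < b n := by
      have : 1 ≤ b n := Nat.one_le_iff_ne_zero.2 (by omega)
      exact_mod_cast this
    have h1 := hM (b n) (le_of_lt hbn)
    rw [Real.dist_eq, sub_zero, abs_div, abs_of_pos hbpos] at h1
    have h2 : |ψ (b n)| < ε / (2 * C') * b n := by
      rw [div_lt_iff₀ hbpos] at h1; linarith
    have h3 : (b n : ℝ) ≤ C' * n := le_trans (hN₁ n hnN₁)
      (mul_le_mul_of_nonneg_right (le_max_left _ _) (le_of_lt hnpos))
    have h4 : |ψ (b n)| / n < ε / (2 * C') * C' := by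
      rw [div_lt_iff₀ hnpos]
      calc |ψ (b n)| < ε / (2 * C') * b n := h2
        _ ≤ ε / (2 * C') * (C' * n) := by
            apply mul_le_mul_of_nonneg_left h3 (le_of_lt hε2)
        _ = ε / (2 * C') * C' * n := by ring
    have h5 : ε / (2 * C') * C' = ε / 2 := by field_simp
    rw [h5] at h4; linarith


lemma window_tendsto (h : ℤ → ℝ) (c s t : ℝ)
    (hp : Tendsto (fun n : ℕ => (∑ j ∈ Finset.range n, h j) / n) atTop (𝓝 c))
    (hm : Tendsto (fun n : ℕ => (∑ j ∈ Finset.range n, h (-(j + 1 : ℕ))) / n) atTop (𝓝 c))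
    (A B : ℕ → ℤ) (hA : Tendsto (fun n => (A n : ℝ) / n) atTop (𝓝 s))
    (hB : Tendsto (fun n => (B n : ℝ) / n) atTop (𝓝 t)) (hst : s < t) :
    Tendsto (fun n => (∑ i ∈ Finset.Ico (A n) (B n), h i) / n) atTop (𝓝 (c * (t - s))) := by
  set Sp : ℕ → ℝ := fun m => ∑ j ∈ Finset.range m, h j with hSp
  set Sm : ℕ → ℝ := fun m => ∑ j ∈ Finset.range m, h (-(j + 1 : ℕ)) with hSm
  set H : ℤ → ℝ := fun m => Sp m.toNat - Sm (-m).toNat with hHdef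
  have Hsucc : ∀ m : ℤ, H (m + 1) = H m + h m := by
    intro m
    rcases le_or_gt 0 m with hm0 | hm0
    · have e1 : (m + 1).toNat = m.toNat + 1 := by omega
      have e2 : (-(m + 1)).toNat = 0 := by omega
      have e3 : (-m).toNat = 0 := by omega
      have e4 : (m.toNat : ℤ) = m := by omega
      simp only [hHdef, e1, e2, e3]
      simp only [hSp, hSm, Finset.sum_range_succ, Finset.range_zero, Finset.sum_empty, e4]
      ring
    · have e1 : (m + 1).toNat = 0 := by omega
      have e2 : m.toNat = 0 := by omega
      have e3 : (-m).toNat = (-(m + 1)).toNat + 1 := by omega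
      have e4 : -(((-(m + 1)).toNat : ℤ) + 1) = m := by omega
      simp only [hHdef, e1, e2, e3]
      simp only [hSp, hSm, Finset.sum_range_succ, Finset.range_zero, Finset.sum_empty]
      have e5 : h (-((((-(m + 1)).toNat : ℕ) + 1 : ℕ) : ℤ)) = h m := by
        congr 1
        all_goals (push_cast; omega)
      rw [e5]
      try ring
  have Hsum : ∀ a b : ℤ, a ≤ b → ∑ i ∈ Finset.Ico a b, h i = H b - H a := by
    intro a b hab
    have key : ∀ N : ℕ, ∑ i ∈ Finset.Ico a (a + (N : ℤ)), h i = H (a + (N : ℤ)) - H a := by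
      intro N
      induction N with
      | zero => simp
      | succ N ih =>
          have hins : Finset.Ico a (a + ((N + 1 : ℕ) : ℤ)) =
              insert (a + (N : ℤ)) (Finset.Ico a (a + (N : ℤ))) := by
            ext i
            simp only [Finset.mem_Ico, Finset.mem_insert]
            push_cast
            omega
          rw [hins, Finset.sum_insert (by simp [Finset.mem_Ico]), ih]
          have e : (a + ((N + 1 : ℕ) : ℤ)) = (a + (N : ℤ)) + 1 := by push_cast; ring
          rw [e, Hsucc]
          ring
    have hb : b = a + (((b - a).toNat : ℕ) : ℤ) := by omega
    rw [hb]
    exact key _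
  have cast_id : ∀ m : ℤ, ((m.toNat : ℝ) - ((-m).toNat : ℝ)) = (m : ℝ) := by
    intro m
    have : (m.toNat : ℤ) - ((-m).toNat : ℤ) = m := by omega
    exact_mod_cast this
  have claim : ∀ (D : ℕ → ℤ) (d : ℝ), Tendsto (fun n => (D n : ℝ) / n) atTop (𝓝 d) →
      Tendsto (fun n => H (D n) / n) atTop (𝓝 (c * d)) := by
    intro D d hD
    have hψ : ∀ (S : ℕ → ℝ), Tendsto (fun m : ℕ => S m / m) atTop (𝓝 c) →
        Tendsto (fun m : ℕ => (S m - c * m) / m) atTop (𝓝 0) := by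
      intro S hS
      have := hS.sub_const c
      rw [sub_self] at this
      apply this.congr'
      filter_upwards [eventually_ge_atTop 1] with m hm
      have hmpos : (m : ℝ) ≠ 0 := by positivity
      field_simp
    have hDbound : ∀ᶠ n in atTop, (((D n).toNat : ℝ) ≤ (|d| + 1) * n ∧
        (((-D n).toNat : ℝ) ≤ (|d| + 1) * n)) := by
      have h1 : ∀ᶠ n in atTop, |(D n : ℝ) / n - d| < 1 :=
        hD.eventually (eventually_abs_sub_lt d one_pos)
      filter_upwards [h1, eventually_ge_atTop 1] with n hn hn1
      have hnpos : (0:ℝ) < n := by exact_mod_cast hn1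
      have habs : |(D n : ℝ)| ≤ (|d| + 1) * n := by
        have : |(D n : ℝ) / n| < |d| + 1 := by
          calc |(D n : ℝ) / n| = |(D n : ℝ) / n - d + d| := by ring_nf
            _ ≤ |(D n : ℝ) / n - d| + |d| := abs_add_le _ _
            _ < 1 + |d| := by linarith
            _ = |d| + 1 := by ring
        rw [abs_div, abs_of_pos hnpos, div_lt_iff₀ hnpos] at this
        linarith
      constructor
      · have : ((D n).toNat : ℝ) ≤ |(D n : ℝ)| := by
          have h2 : ((D n).toNat : ℤ) ≤ |D n| := by
            rw [Int.abs_eq_natAbs]; omega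
          calc ((D n).toNat : ℝ) ≤ (|D n| : ℤ) := by exact_mod_cast h2
            _ = |(D n : ℝ)| := by push_cast; rfl
        linarith
      · have : (((-D n).toNat) : ℝ) ≤ |(D n : ℝ)| := by
          have h2 : (((-D n).toNat) : ℤ) ≤ |D n| := by
            rw [Int.abs_eq_natAbs]; omega
          calc (((-D n).toNat) : ℝ) ≤ (|D n| : ℤ) := by exact_mod_cast h2
            _ = |(D n : ℝ)| := by push_cast; rfl
        linarith
    have t1 := sublinear_comp (fun m => Sp m - c * m) (hψ Sp hp)
      (fun n => (D n).toNat) (|d| + 1) (hDbound.mono fun n hn => hn.1)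
    have t2 := sublinear_comp (fun m => Sm m - c * m) (hψ Sm hm)
      (fun n => (-D n).toNat) (|d| + 1) (hDbound.mono fun n hn => hn.2)
    have key : ∀ n : ℕ, H (D n) / n =
        (Sp (D n).toNat - c * (D n).toNat) / n - (Sm (-D n).toNat - c * ((-D n).toNat)) / n
          + c * ((D n : ℝ) / n) := by
      intro n
      have expand : H (D n) = (Sp (D n).toNat - c * (D n).toNat)
          - (Sm (-D n).toNat - c * ((-D n).toNat)) + c * (D n : ℝ) := by
        simp only [hHdef]
        rw [← cast_id (D n)]
        ring
      rw [expand, ← mul_div_assoc]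
      rw [add_div, sub_div]
    have final := (t1.sub t2).add (hD.const_mul c)
    rw [sub_zero, zero_add] at final
    exact Tendsto.congr (fun n => (key n).symm) final
  have hAB : ∀ᶠ n in atTop, A n ≤ B n := by
    have hpos := (hB.sub hA).eventually
      (eventually_gt_nhds (show (0:ℝ) < t - s by linarith))
    filter_upwards [hpos, eventually_ge_atTop 1] with n hn hn1
    have hnpos : (0:ℝ) < n := by exact_mod_cast hn1
    have : (A n : ℝ) / n < (B n : ℝ) / n := by linarith
    rw [div_lt_div_iff_of_pos_right hnpos] at this
    exact_mod_cast this.le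
  have main := (claim B t hB).sub (claim A s hA)
  have hct : c * t - c * s = c * (t - s) := by ring
  rw [hct] at main
  apply main.congr'
  filter_upwards [hAB] with n hn
  rw [Hsum (A n) (B n) hn, sub_div (H (B n)) (H (A n)) (n:ℝ)]

section BirkhoffThm

variable {Ω : Type*} [MeasurableSpace Ω] {μ : Measure Ω}

lemma integrable_of_mem01 [IsProbabilityMeasure μ] {g : Ω → ℝ} (hgm : Measurable g)
    (h0 : ∀ ω, 0 ≤ g ω) (h1 : ∀ ω, g ω ≤ 1) : Integrable g μ := by
  apply Integrable.mono' (integrable_const (1 : ℝ)) hgm.aestronglyMeasurable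
  filter_upwards with ω
  rw [Real.norm_eq_abs, abs_of_nonneg (h0 ω)]
  exact h1 ω

/-- running maximum of Birkhoff sums, `max (0, S₁, …, S_N)`. -/
noncomputable def maxS (T : Ω → Ω) (g : Ω → ℝ) : ℕ → Ω → ℝ
  | 0 => fun _ => 0
  | (N + 1) => fun ω => max (maxS T g N ω) (birkhoffSum T g (N + 1) ω)

lemma maxS_nonneg (T : Ω → Ω) (g : Ω → ℝ) (N : ℕ) (ω : Ω) : 0 ≤ maxS T g N ω := by
  induction N with
  | zero => exact le_refl 0
  | succ N ih => exact le_trans ih (le_max_left _ _)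

lemma birkhoffSum_le_maxS (T : Ω → Ω) (g : Ω → ℝ) {n N : ℕ} (hn : n ≤ N) (ω : Ω) :
    birkhoffSum T g n ω ≤ maxS T g N ω := by
  induction N with
  | zero =>
      have : n = 0 := by omega
      subst this
      simp [maxS, birkhoffSum_zero]
  | succ N ih =>
      rcases Nat.lt_or_ge n (N + 1) with h | h
      · exact le_trans (ih (by omega)) (le_max_left _ _)
      · have : n = N + 1 := by omega
        subst this
        exact le_max_right _ _

lemma maxS_le (T : Ω → Ω) (g : Ω → ℝ) {N : ℕ} {ω : Ω} {x : ℝ} (h0 : 0 ≤ x)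
    (h : ∀ n, 1 ≤ n → n ≤ N → birkhoffSum T g n ω ≤ x) : maxS T g N ω ≤ x := by
  induction N with
  | zero => exact h0
  | succ N ih =>
      exact max_le (ih fun n hn1 hnN => h n hn1 (by omega)) (h (N + 1) (by omega) le_rfl)

lemma measurable_birkhoffSum {T : Ω → Ω} (hT : Measurable T) {g : Ω → ℝ}
    (hg : Measurable g) (n : ℕ) : Measurable (birkhoffSum T g n) :=
  Finset.measurable_sum _ fun k _ => hg.comp (hT.iterate k)

lemma integrable_birkhoffSum [IsProbabilityMeasure μ] {T : Ω → Ω} (hT : MeasurePreserving T μ μ) {g : Ω → ℝ}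
    (hg : Integrable g μ) (n : ℕ) : Integrable (birkhoffSum T g n) μ := by
  apply integrable_finset_sum
  intro k _
  exact memLp_one_iff_integrable.mp
    ((memLp_one_iff_integrable.mpr hg).comp_measurePreserving (hT.iterate k))

lemma measurable_maxS {T : Ω → Ω} (hT : Measurable T) {g : Ω → ℝ} (hg : Measurable g)
    (N : ℕ) : Measurable (maxS T g N) := by
  induction N with
  | zero => exact measurable_const
  | succ N ih => exact ih.max (measurable_birkhoffSum hT hg (N + 1))

lemma integrable_maxS [IsProbabilityMeasure μ] {T : Ω → Ω} (hT : MeasurePreserving T μ μ) {g : Ω → ℝ}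
    (hg : Integrable g μ) (N : ℕ) : Integrable (maxS T g N) μ := by
  induction N with
  | zero => exact integrable_const 0
  | succ N ih => exact ih.sup (integrable_birkhoffSum hT hg (N + 1))

/-- Garsia's maximal ergodic lemma. -/
theorem maximal_ergodic [IsProbabilityMeasure μ] {T : Ω → Ω} (hT : MeasurePreserving T μ μ) {g : Ω → ℝ}
    (hgm : Measurable g) (hgi : Integrable g μ) (N : ℕ) :
    0 ≤ ∫ ω in {ω | 0 < maxS T g N ω}, g ω ∂μ := by
  set M := maxS T g N with hM
  set E := {ω | 0 < M ω} with hE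
  have hMmeas : Measurable M := measurable_maxS hT.measurable hgm N
  have hEmeas : MeasurableSet E := measurableSet_lt measurable_const hMmeas
  have hMi : Integrable M μ := integrable_maxS hT hgi N
  have hMTi : Integrable (fun ω => M (T ω)) μ :=
    memLp_one_iff_integrable.mp ((memLp_one_iff_integrable.mpr hMi).comp_measurePreserving hT)
  have key : ∀ ω ∈ E, M ω ≤ g ω + M (T ω) := by
    intro ω hω
    have hω0 : 0 < M ω := hω
    have h1 : M ω ≤ max 0 (g ω + M (T ω)) := by
      apply maxS_le T g (le_max_left 0 _)
      intro n hn1 hnN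
      obtain ⟨m, rfl⟩ : ∃ m, n = m + 1 := ⟨n - 1, by omega⟩
      rw [birkhoffSum_succ']
      have h2 : birkhoffSum T g m (T ω) ≤ M (T ω) :=
        birkhoffSum_le_maxS T g (by omega) (T ω)
      exact le_trans (add_le_add_right h2 _) (le_max_right _ _)
    rcases le_or_gt (g ω + M (T ω)) 0 with h | h
    · exfalso
      rw [max_eq_left h] at h1
      exact absurd (lt_of_lt_of_le hω0 h1) (lt_irrefl 0)
    · rwa [max_eq_right h.le] at h1
  have step1 : ∫ ω in E, (M ω - M (T ω)) ∂μ ≤ ∫ ω in E, g ω ∂μ := by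
    apply setIntegral_mono_on (hMi.sub hMTi).integrableOn hgi.integrableOn hEmeas
    intro ω hω
    simp only [Pi.sub_apply]
    linarith [key ω hω]
  have step2 : ∫ ω in E, (M ω - M (T ω)) ∂μ
      = ∫ ω in E, M ω ∂μ - ∫ ω in E, M (T ω) ∂μ :=
    integral_sub hMi.integrableOn hMTi.integrableOn
  have step3 : ∫ ω in E, M ω ∂μ = ∫ ω, M ω ∂μ := by
    apply setIntegral_eq_integral_of_forall_compl_eq_zero
    intro ω hω
    have h1 : ¬ (0 < M ω) := hω
    exact le_antisymm (not_lt.1 h1) (maxS_nonneg T g N ω)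
  have step4 : ∫ ω in E, M (T ω) ∂μ ≤ ∫ ω, M (T ω) ∂μ := by
    apply setIntegral_le_integral hMTi
    filter_upwards with ω
    exact maxS_nonneg T g N (T ω)
  have step5 : ∫ ω, M (T ω) ∂μ = ∫ ω, M ω ∂μ := by
    calc ∫ ω, M (T ω) ∂μ = ∫ y, M y ∂(Measure.map T μ) :=
          (integral_map hT.measurable.aemeasurable hMmeas.aestronglyMeasurable).symm
      _ = ∫ y, M y ∂μ := by rw [hT.map_eq]
  have : (0:ℝ) ≤ ∫ ω in E, M ω ∂μ - ∫ ω in E, M (T ω) ∂μ := by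
    rw [step3]
    linarith [step4, step5.le]
  linarith [step1, step2]

theorem birkhoff_limsup_le [IsProbabilityMeasure μ] {T : Ω → Ω} (hT : MeasurePreserving T μ μ)
    (hergT : ∀ B : Set Ω, MeasurableSet B → T ⁻¹' B = B → μ B = 0 ∨ μ B = 1)
    {g : Ω → ℝ} (hgm : Measurable g) (hg0 : ∀ ω, 0 ≤ g ω) (hg1 : ∀ ω, g ω ≤ 1) :
    ∀ᵐ ω ∂μ, limsup (fun n : ℕ => birkhoffSum T g n ω / n) atTop ≤ ∫ ω, g ω ∂μ := by
  have hgi : Integrable g μ := integrable_of_mem01 hgm hg0 hg1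
  set c : ℝ := ∫ ω, g ω ∂μ with hc
  set A : ℕ → Ω → ℝ := fun n ω => birkhoffSum T g n ω / n with hA
  have hS0 : ∀ n (ω : Ω), 0 ≤ birkhoffSum T g n ω := fun n ω =>
    Finset.sum_nonneg fun k _ => hg0 _
  have hSn : ∀ n (ω : Ω), birkhoffSum T g n ω ≤ n := by
    intro n ω
    calc birkhoffSum T g n ω ≤ ∑ _k ∈ Finset.range n, (1:ℝ) :=
          Finset.sum_le_sum fun k _ => hg1 _
      _ = n := by simp
  have hA0 : ∀ n (ω : Ω), 0 ≤ A n ω := by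
    intro n ω
    apply div_nonneg (hS0 n ω) (Nat.cast_nonneg n)
  have hA1 : ∀ n (ω : Ω), A n ω ≤ 1 := by
    intro n ω
    rcases Nat.eq_zero_or_pos n with rfl | hn
    · simp [hA, birkhoffSum_zero]
    · have hnpos : (0:ℝ) < n := by exact_mod_cast hn
      rw [hA]
      simp only
      rw [div_le_one hnpos]
      exact hSn n ω
  have hc0 : 0 ≤ c := integral_nonneg hg0
  have hAmeas : ∀ n, Measurable (A n) := fun n =>
    (measurable_birkhoffSum hT.measurable hgm n).div_const _
  set L : Ω → ℝ := fun ω => limsup (fun n => A n ω) atTop with hL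
  have hLmeas : Measurable L := Measurable.limsup hAmeas
  have hLinv : ∀ ω, L (T ω) = L ω := by
    intro ω
    apply limsup_eq_of_tendsto_sub (fun n => A n ω) (fun n => A n (T ω))
      (fun n => abs_le.2 ⟨by linarith [hA0 n ω], hA1 n ω⟩)
    have hbound : ∀ᶠ n : ℕ in atTop, |A n (T ω) - A (n + 1) ω| ≤ 2 / n := by
      filter_upwards [eventually_ge_atTop 1] with n hn
      have hnpos : (0:ℝ) < n := by exact_mod_cast hn
      have hn1pos : (0:ℝ) < (n:ℝ) + 1 := by linarith
      set a : ℝ := birkhoffSum T g n (T ω) with ha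
      have e1 : A (n + 1) ω = (g ω + a) / ((n:ℝ) + 1) := by
        rw [hA]
        simp only
        rw [birkhoffSum_succ']
        push_cast
        ring_nf
        rw [ha]; ring
      have e2 : A n (T ω) = a / n := rfl
      rw [e1, e2, div_sub_div _ _ (ne_of_gt hnpos) (ne_of_gt hn1pos), abs_div]
      have hnum : |a * ((n:ℝ) + 1) - (n:ℝ) * (g ω + a)| ≤ 2 * n := by
        have h1 : 0 ≤ a := hS0 n (T ω)
        have h2 : a ≤ n := hSn n (T ω)
        have h3 : 0 ≤ g ω := hg0 ω
        have h4 : g ω ≤ 1 := hg1 ω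
        have : a * ((n:ℝ) + 1) - (n:ℝ) * (g ω + a) = a - n * g ω := by ring
        rw [this, abs_le]
        constructor <;> nlinarith
      have hden : |(n:ℝ) * ((n:ℝ) + 1)| = (n:ℝ) * ((n:ℝ) + 1) :=
        abs_of_pos (by positivity)
      rw [hden]
      calc |a * ((n:ℝ) + 1) - (n:ℝ) * (g ω + a)| / ((n:ℝ) * ((n:ℝ) + 1))
          ≤ 2 * n / ((n:ℝ) * ((n:ℝ) + 1)) := by
            apply div_le_div_of_nonneg_right hnum (by positivity)
        _ = 2 / ((n:ℝ) + 1) := by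
            field_simp
        _ ≤ 2 / n := by
            apply div_le_div_of_nonneg_left (by norm_num) hnpos (by linarith)
    have h2n : Tendsto (fun n : ℕ => 2 / (n:ℝ)) atTop (𝓝 0) :=
      tendsto_const_div_atTop_nhds_zero_nat 2
    exact squeeze_zero_norm' hbound h2n
  have key : ∀ q : ℚ, c < q → μ {ω | (q:ℝ) < L ω} = 0 := by
    intro q hq
    set B := {ω | (q:ℝ) < L ω} with hB
    have hBm : MeasurableSet B := measurableSet_lt measurable_const hLmeas
    have hBinv : T ⁻¹' B = B := by
      ext ω
      simp only [hB, mem_preimage, mem_setOf_eq, hLinv ω]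
    rcases hergT B hBm hBinv with h0 | h1
    · exact h0
    exfalso
    set h : Ω → ℝ := fun ω => g ω - q with hh
    have hhm : Measurable h := hgm.sub measurable_const
    have hhi : Integrable h μ := hgi.sub (integrable_const _)
    set E : ℕ → Set Ω := fun N => {ω | 0 < maxS T h N ω} with hEdef
    have hEmeas : ∀ N, MeasurableSet (E N) := fun N =>
      measurableSet_lt measurable_const (measurable_maxS hT.measurable hhm N)
    have hmono : Monotone E := by
      apply monotone_nat_of_le_succ
      intro N ω hω
      have : maxS T h N ω ≤ maxS T h (N + 1) ω := le_max_left _ _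
      exact lt_of_lt_of_le hω this
    have hint : ∀ N, 0 ≤ ∫ ω in E N, h ω ∂μ := fun N => maximal_ergodic hT hhm hhi N
    have hlim : Tendsto (fun N => ∫ ω in E N, h ω ∂μ) atTop (𝓝 (∫ ω in ⋃ N, E N, h ω ∂μ)) :=
      tendsto_setIntegral_of_monotone hEmeas hmono hhi.integrableOn
    have hEc : 0 ≤ ∫ ω in ⋃ N, E N, h ω ∂μ := ge_of_tendsto' hlim hint
    have hBE : B ⊆ ⋃ N, E N := by
      intro ω hω
      have hω' : (q:ℝ) < L ω := hω
      have hex : ∃ n, 1 ≤ n ∧ (q:ℝ) < A n ω := by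
        by_contra hcon
        push_neg at hcon
        have hall : ∀ n, A n ω ≤ q := by
          intro n
          rcases Nat.eq_zero_or_pos n with rfl | hn
          · have : A 0 ω = 0 := by simp [hA, birkhoffSum_zero]
            rw [this]
            exact_mod_cast le_trans hc0 hq.le
          · exact hcon n hn
        have : L ω ≤ q := limsup_le_of_le
          ((isBoundedUnder_of ⟨0, fun n => hA0 n ω⟩ :
            IsBoundedUnder (· ≥ ·) atTop fun n => A n ω).isCoboundedUnder_le)
          (Eventually.of_forall hall)
        linarith
      obtain ⟨n, hn1, hnq⟩ := hex
      have hnpos : (0:ℝ) < n := by exact_mod_cast hn1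
      have hSq : (q:ℝ) * n < birkhoffSum T g n ω := by
        rw [hA] at hnq
        simp only at hnq
        rw [lt_div_iff₀ hnpos] at hnq
        linarith
      have hbh : birkhoffSum T h n ω = birkhoffSum T g n ω - n * q := by
        simp only [hh, birkhoffSum, Finset.sum_sub_distrib, Finset.sum_const,
          Finset.card_range, nsmul_eq_mul]
      have hpos : 0 < birkhoffSum T h n ω := by
        rw [hbh]
        nlinarith
      refine mem_iUnion.2 ⟨n, ?_⟩
      have : birkhoffSum T h n ω ≤ maxS T h n ω := birkhoffSum_le_maxS T h le_rfl ω
      exact lt_of_lt_of_le hpos this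
    have hμE : μ (⋃ N, E N) = 1 := by
      apply le_antisymm prob_le_one
      rw [← h1]
      exact measure_mono hBE
    have hfull : ∫ ω in ⋃ N, E N, h ω ∂μ = ∫ ω, h ω ∂μ := by
      have hcompl : μ (⋃ N, E N)ᶜ = 0 := by
        rw [measure_compl (MeasurableSet.iUnion hEmeas) (measure_ne_top μ _), hμE]
        simp
      have : (⋃ N, E N) =ᵐ[μ] (univ : Set Ω) := by
        rw [ae_eq_univ]
        exact hcompl
      rw [setIntegral_congr_set this, setIntegral_univ]
    have hinth : ∫ ω, h ω ∂μ = c - q := by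
      rw [hh]
      simp only
      rw [integral_sub hgi (integrable_const _), integral_const]
      simp [measure_univ]
      exact hc.symm
    rw [hfull, hinth] at hEc
    linarith
  have hae : ∀ᵐ ω ∂μ, ∀ q : ℚ, c < q → ¬((q:ℝ) < L ω) := by
    rw [ae_all_iff]
    intro q
    by_cases hq : c < q
    · have h0 := key q hq
      have : ∀ᵐ ω ∂μ, ω ∉ {ω | (q:ℝ) < L ω} :=
        measure_eq_zero_iff_ae_notMem.1 h0
      filter_upwards [this] with ω hω _
      exact hω
    · filter_upwards with ω hc'
      exact absurd hc' hq
  filter_upwards [hae] with ω hω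
  by_contra hcon
  push_neg at hcon
  obtain ⟨q, hq1, hq2⟩ := exists_rat_btwn hcon
  exact hω q hq1 hq2

theorem birkhoff_ae [IsProbabilityMeasure μ] {T : Ω → Ω} (hT : MeasurePreserving T μ μ)
    (hergT : ∀ B : Set Ω, MeasurableSet B → T ⁻¹' B = B → μ B = 0 ∨ μ B = 1)
    {g : Ω → ℝ} (hgm : Measurable g) (hg0 : ∀ ω, 0 ≤ g ω) (hg1 : ∀ ω, g ω ≤ 1) :
    ∀ᵐ ω ∂μ, Tendsto (fun n : ℕ => birkhoffSum T g n ω / n) atTop (𝓝 (∫ ω, g ω ∂μ)) := by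
  have hgi : Integrable g μ := integrable_of_mem01 hgm hg0 hg1
  set c : ℝ := ∫ ω, g ω ∂μ with hc
  set g' : Ω → ℝ := fun ω => 1 - g ω with hg'
  have hg'm : Measurable g' := measurable_const.sub hgm
  have hg'0 : ∀ ω, 0 ≤ g' ω := fun ω => by simp [hg']; linarith [hg1 ω]
  have hg'1 : ∀ ω, g' ω ≤ 1 := fun ω => by simp [hg']; linarith [hg0 ω]
  have hintg' : ∫ ω, g' ω ∂μ = 1 - c := by
    rw [hg']
    simp only
    rw [integral_sub (integrable_const _) hgi, integral_const]
    simp [measure_univ]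
    exact hc.symm
  have h1 := birkhoff_limsup_le hT hergT hgm hg0 hg1
  have h2 := birkhoff_limsup_le hT hergT hg'm hg'0 hg'1
  rw [hintg'] at h2
  have hS0 : ∀ n (ω : Ω), 0 ≤ birkhoffSum T g n ω := fun n ω =>
    Finset.sum_nonneg fun k _ => hg0 _
  have hSn : ∀ n (ω : Ω), birkhoffSum T g n ω ≤ n := by
    intro n ω
    calc birkhoffSum T g n ω ≤ ∑ _k ∈ Finset.range n, (1:ℝ) :=
          Finset.sum_le_sum fun k _ => hg1 _
      _ = n := by simp
  filter_upwards [h1, h2] with ω hω1 hω2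
  set A : ℕ → ℝ := fun n => birkhoffSum T g n ω / n with hA
  have hA0 : ∀ n, 0 ≤ A n := fun n => div_nonneg (hS0 n ω) (Nat.cast_nonneg n)
  have hA1 : ∀ n, A n ≤ 1 := by
    intro n
    rcases Nat.eq_zero_or_pos n with rfl | hn
    · simp [hA, birkhoffSum_zero]
    · have hnpos : (0:ℝ) < n := by exact_mod_cast hn
      rw [hA]
      simp only
      rw [div_le_one hnpos]
      exact hSn n ω
  have hSg' : ∀ n : ℕ, birkhoffSum T g' n ω = n - birkhoffSum T g n ω := by
    intro n
    simp only [hg', birkhoffSum, Finset.sum_sub_distrib, Finset.sum_const,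
      Finset.card_range, nsmul_eq_mul, mul_one]
  have hA'eq : ∀ᶠ n : ℕ in atTop, birkhoffSum T g' n ω / n = 1 - A n := by
    filter_upwards [eventually_ge_atTop 1] with n hn
    have hnpos : (0:ℝ) < n := by exact_mod_cast hn
    rw [hSg', sub_div, div_self (ne_of_gt hnpos)]
  have hlsub : limsup (fun n : ℕ => birkhoffSum T g' n ω / n) atTop
      = limsup (fun n : ℕ => 1 - A n) atTop := limsup_congr hA'eq
  have hconst : limsup (fun n : ℕ => 1 - A n) atTop = 1 - liminf A atTop :=
    limsup_const_sub atTop A 1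
      (IsBoundedUnder.isCoboundedUnder_ge (isBoundedUnder_of ⟨1, fun n => hA1 n⟩))
      (isBoundedUnder_of ⟨0, fun n => hA0 n⟩)
  rw [hlsub, hconst] at hω2
  have hliminf : c ≤ liminf A atTop := by linarith
  exact tendsto_of_le_liminf_of_limsup_le hliminf hω1
    (isBoundedUnder_of ⟨1, fun n => hA1 n⟩) (isBoundedUnder_of ⟨0, fun n => hA0 n⟩)

end BirkhoffThm

section Main

variable {Ω : Type*} [MeasurableSpace Ω] {μ : Measure Ω}

lemma invariant_all (τ : ℤ → Ω → Ω) (hτ0 : τ 0 = id)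
    (hτadd : ∀ i j : ℤ, τ (i + j) = τ i ∘ τ j) {B : Set Ω}
    (h1 : τ 1 ⁻¹' B = B) : ∀ i : ℤ, τ i ⁻¹' B = B := by
  intro i
  induction i using Int.induction_on with
  | zero => rw [hτ0, Set.preimage_id]
  | succ i ih =>
      have e : τ ((i : ℤ) + 1) = τ i ∘ τ 1 := hτadd i 1
      rw [e, Set.preimage_comp, ih, h1]
  | pred i ih =>
      have e : τ (-(i : ℤ)) = τ 1 ∘ τ (-(i : ℤ) - 1) := by
        have e2 : (1 + (-(i : ℤ) - 1)) = -(i : ℤ) := by ring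
        have e4 := hτadd 1 (-(i : ℤ) - 1)
        rw [e2] at e4
        exact e4
      have e3 : τ (-(i : ℤ)) ⁻¹' B = τ (-(i : ℤ) - 1) ⁻¹' B := by
        rw [e, Set.preimage_comp, h1]
      rw [← e3, ih]

lemma iterate_gen (τ : ℤ → Ω → Ω) (hτ0 : τ 0 = id)
    (hτadd : ∀ i j : ℤ, τ (i + j) = τ i ∘ τ j) :
    ∀ n : ℕ, (τ 1)^[n] = τ (n : ℤ) := by
  intro n
  induction n with
  | zero => simpa using hτ0.symm
  | succ n ih =>
      rw [Function.iterate_succ', ih]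
      have e : ((n + 1 : ℕ) : ℤ) = 1 + (n : ℤ) := by push_cast; ring
      rw [e, hτadd 1 (n : ℤ)]

lemma ae_comp_mp {T : Ω → Ω} (hT : MeasurePreserving T μ μ) {P : Ω → Prop}
    (h : ∀ᵐ ω ∂μ, P ω) : ∀ᵐ ω ∂μ, P (T ω) := by
  have h2 : μ {ω | ¬ P ω} = 0 := by rwa [ae_iff] at h
  obtain ⟨N, hsub, hNm, hN0⟩ := exists_measurable_superset_of_null h2
  have hpre : μ (T ⁻¹' N) = 0 := by
    rw [hT.measure_preimage hNm.nullMeasurableSet, hN0]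
  rw [ae_iff]
  apply measure_mono_null _ hpre
  intro ω hω
  exact hsub hω

end Main

lemma exists_measurable_one {Ω : Type*} [MeasurableSpace Ω] {μ : Measure Ω}
    [IsProbabilityMeasure μ] {P : Ω → Prop} (h : ∀ᵐ ω ∂μ, P ω) :
    ∃ Ω' : Set Ω, MeasurableSet Ω' ∧ μ Ω' = 1 ∧ ∀ ω ∈ Ω', P ω := by
  refine ⟨(toMeasurable μ {ω | ¬ P ω})ᶜ, (measurableSet_toMeasurable μ _).compl, ?_, ?_⟩
  · have h0 : μ {ω | ¬ P ω} = 0 := by rwa [ae_iff] at h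
    rw [measure_compl (measurableSet_toMeasurable μ _) (measure_ne_top μ _),
      measure_toMeasurable, h0]
    simp
  · intro ω hω
    by_contra hnp
    exact hω (subset_toMeasurable μ _ hnp)

/-- Proposition 4.2: extended Birkhoff ergodic theorem. For an ergodic measure-preserving
`ℤ`-action `τ` and integrable `f`, there is a full-measure set `Ω'` such that for every
`ω ∈ Ω'`, every real center `x`, every rational `ε > 0` and every rational level `k`,
`(2εn)⁻¹ #{i ∈ ℤ : |i/n - x| < ε, f(τᵢω) ≤ k} → ℙ(f ≤ k)`. -/
theorem stmt_7 {Ω : Type*} [MeasurableSpace Ω] (μ : Measure Ω) [IsProbabilityMeasure μ]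
    (τ : ℤ → Ω → Ω) (hτ0 : τ 0 = id) (hτadd : ∀ i j : ℤ, τ (i + j) = τ i ∘ τ j)
    (hmp : ∀ i : ℤ, MeasurePreserving (τ i) μ μ)
    (herg : ∀ B : Set Ω, MeasurableSet B → (∀ i : ℤ, τ i ⁻¹' B = B) → μ B = 0 ∨ μ B = 1)
    (f : Ω → ℝ) (hf : Integrable f μ) :
    ∃ Ω' : Set Ω, MeasurableSet Ω' ∧ μ Ω' = 1 ∧
      ∀ ω ∈ Ω', ∀ x : ℝ, ∀ ε : ℚ, 0 < ε → ∀ k : ℚ,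
        Tendsto (fun n : ℕ =>
            (1 / (2 * (ε : ℝ) * (n : ℝ))) *
              (Nat.card {i : ℤ | |(i : ℝ) / (n : ℝ) - x| < (ε : ℝ) ∧ f (τ i ω) ≤ (k : ℝ)} : ℝ))
          atTop (nhds (μ {ω' : Ω | f ω' ≤ (k : ℝ)}).toReal) := by
  classical
  have hfa := hf.1
  set f' : Ω → ℝ := hfa.mk f with hf'def
  have hf'm : Measurable f' := hfa.stronglyMeasurable_mk.measurable
  have hff' : f =ᵐ[μ] f' := hfa.ae_eq_mk
  set T : Ω → Ω := τ 1 with hTdef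
  set T' : Ω → Ω := τ (-1) with hT'def
  have hT : MeasurePreserving T μ μ := hmp 1
  have hT'mp : MeasurePreserving T' μ μ := hmp (-1)
  have hergT : ∀ B : Set Ω, MeasurableSet B → T ⁻¹' B = B → μ B = 0 ∨ μ B = 1 :=
    fun B hB h1 => herg B hB (invariant_all τ hτ0 hτadd h1)
  set σ : ℤ → Ω → Ω := fun i => τ (-i) with hσdef
  have hσ0 : σ 0 = id := by simpa [hσdef] using hτ0
  have hσadd : ∀ i j : ℤ, σ (i + j) = σ i ∘ σ j := by
    intro i j
    simp only [hσdef, neg_add]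
    exact hτadd (-i) (-j)
  have hergT' : ∀ B : Set Ω, MeasurableSet B → T' ⁻¹' B = B → μ B = 0 ∨ μ B = 1 := by
    intro B hB h1
    have hall := invariant_all σ hσ0 hσadd (B := B) (by
      show σ 1 ⁻¹' B = B
      simpa [hσdef] using h1)
    apply herg B hB
    intro i
    have h2 := hall (-i)
    simpa [hσdef] using h2
  have hTiter : ∀ n : ℕ, T^[n] = τ (n : ℤ) := iterate_gen τ hτ0 hτadd
  have hT'iter : ∀ n : ℕ, T'^[n] = τ (-(n : ℤ)) := by
    intro n
    have h2 := iterate_gen σ hσ0 hσadd n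
    simpa [hσdef] using h2
  set s : ℚ → Set Ω := fun k => {ω | f' ω ≤ (k : ℝ)} with hsdef
  have hsm : ∀ k, MeasurableSet (s k) := fun k => measurableSet_le hf'm measurable_const
  set G : ℚ → Ω → ℝ := fun k => (s k).indicator (fun _ => (1 : ℝ)) with hGdef
  have hGm : ∀ k, Measurable (G k) := fun k => measurable_const.indicator (hsm k)
  have hG0 : ∀ k ω, 0 ≤ G k ω := fun k ω =>
    Set.indicator_nonneg (fun _ _ => zero_le_one) ω
  have hG1 : ∀ k ω, G k ω ≤ 1 := by
    intro k ω
    by_cases hc : ω ∈ s k <;> simp [hGdef, Set.indicator_apply, hc]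
  have hGint : ∀ k, ∫ ω, G k ω ∂μ = (μ (s k)).toReal := by
    intro k
    rw [hGdef]
    simp only
    rw [integral_indicator_const (1 : ℝ) (hsm k)]
    simp
    rfl
  have hB1 : ∀ k : ℚ, ∀ᵐ ω ∂μ, Tendsto (fun n : ℕ => birkhoffSum T (G k) n ω / n)
      atTop (𝓝 ((μ (s k)).toReal)) := by
    intro k
    have h2 := birkhoff_ae hT hergT (hGm k) (hG0 k) (hG1 k)
    rwa [hGint k] at h2
  have hB2 : ∀ k : ℚ, ∀ᵐ ω ∂μ, Tendsto (fun n : ℕ => birkhoffSum T' (G k) n (T' ω) / n)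
      atTop (𝓝 ((μ (s k)).toReal)) := by
    intro k
    have h2 := birkhoff_ae hT'mp hergT' (hGm k) (hG0 k) (hG1 k)
    rw [hGint k] at h2
    exact ae_comp_mp hT'mp h2
  have hcompat : ∀ᵐ ω ∂μ, ∀ i : ℤ, f (τ i ω) = f' (τ i ω) := by
    rw [ae_all_iff]
    intro i
    have h2 := (hmp i).quasiMeasurePreserving.ae_eq_comp hff'
    filter_upwards [h2] with ω hω
    exact hω
  have hgood := (ae_all_iff.2 fun k : ℚ => (hB1 k).and (hB2 k)).and hcompat
  obtain ⟨Ω', hΩ'm, hΩ'1, hΩ'P⟩ := exists_measurable_one hgood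
  refine ⟨Ω', hΩ'm, hΩ'1, ?_⟩
  intro ω hω x ε hε k
  obtain ⟨hconv, hcomp⟩ := hΩ'P ω hω
  obtain ⟨hcv1, hcv2⟩ := hconv k
  have hεR : (0 : ℝ) < (ε : ℝ) := by exact_mod_cast hε
  set ck : ℝ := (μ (s k)).toReal with hck
  set h : ℤ → ℝ := fun i => G k (τ i ω) with hhdef
  have hp : Tendsto (fun n : ℕ => (∑ j ∈ Finset.range n, h (j : ℤ)) / n) atTop (𝓝 ck) := by
    apply hcv1.congr
    intro n
    congr 1
    rw [birkhoffSum]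
    apply Finset.sum_congr rfl
    intro j _
    rw [hTiter j]
  have hm : Tendsto (fun n : ℕ => (∑ j ∈ Finset.range n, h (-(j + 1 : ℕ))) / n)
      atTop (𝓝 ck) := by
    apply hcv2.congr
    intro n
    congr 1
    rw [birkhoffSum]
    apply Finset.sum_congr rfl
    intro j _
    rw [hT'iter j]
    show G k (τ (-(j:ℤ)) (τ (-1) ω)) = h (-(j + 1 : ℕ))
    have e : τ (-(j:ℤ)) (τ (-1) ω) = τ (-(j:ℤ) + -1) ω := by
      rw [hτadd (-(j:ℤ)) (-1)]
      rfl
    rw [e, hhdef]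
    have e2 : (-(j:ℤ) + -1) = -((j + 1 : ℕ) : ℤ) := by push_cast; ring
    rw [e2]
  set Aa : ℕ → ℤ := fun n => ⌊(n : ℝ) * (x - ε)⌋ + 1 with hAadef
  set Bb : ℕ → ℤ := fun n => ⌈(n : ℝ) * (x + ε)⌉ with hBbdef
  have hAten : Tendsto (fun n : ℕ => (Aa n : ℝ) / n) atTop (𝓝 (x - (ε : ℝ))) := by
    have hbd : ∀ᶠ n : ℕ in atTop, ‖(Aa n : ℝ) / n - (x - (ε : ℝ))‖ ≤ 1 / n := by
      filter_upwards [eventually_ge_atTop 1] with n hn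
      have hnpos : (0 : ℝ) < n := by exact_mod_cast hn
      have h1 : (n : ℝ) * (x - ε) < (Aa n : ℝ) := by
        rw [hAadef]; push_cast
        linarith [Int.lt_floor_add_one ((n : ℝ) * (x - ε))]
      have h2 : (Aa n : ℝ) ≤ (n : ℝ) * (x - ε) + 1 := by
        rw [hAadef]; push_cast
        linarith [Int.floor_le ((n : ℝ) * (x - ε))]
      have he : (Aa n : ℝ) / n - (x - (ε : ℝ)) = ((Aa n : ℝ) - (n : ℝ) * (x - ε)) / n := by
        field_simp
      rw [Real.norm_eq_abs, he, abs_div, abs_of_pos hnpos]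
      apply div_le_div_of_nonneg_right _ hnpos.le
      rw [abs_le]
      constructor <;> linarith
    have h0 := squeeze_zero_norm' hbd (tendsto_const_div_atTop_nhds_zero_nat 1)
    have h1 := h0.add_const (x - (ε : ℝ))
    rw [zero_add] at h1
    apply h1.congr
    intro n
    ring
  have hBten : Tendsto (fun n : ℕ => (Bb n : ℝ) / n) atTop (𝓝 (x + (ε : ℝ))) := by
    have hbd : ∀ᶠ n : ℕ in atTop, ‖(Bb n : ℝ) / n - (x + (ε : ℝ))‖ ≤ 1 / n := by
      filter_upwards [eventually_ge_atTop 1] with n hn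
      have hnpos : (0 : ℝ) < n := by exact_mod_cast hn
      have h1 : (n : ℝ) * (x + ε) ≤ (Bb n : ℝ) := by
        rw [hBbdef]
        exact Int.le_ceil _
      have h2 : (Bb n : ℝ) < (n : ℝ) * (x + ε) + 1 := by
        rw [hBbdef]
        exact Int.ceil_lt_add_one _
      have he : (Bb n : ℝ) / n - (x + (ε : ℝ)) = ((Bb n : ℝ) - (n : ℝ) * (x + ε)) / n := by
        field_simp
      rw [Real.norm_eq_abs, he, abs_div, abs_of_pos hnpos]
      apply div_le_div_of_nonneg_right _ hnpos.le
      rw [abs_le]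
      constructor <;> linarith
    have h0 := squeeze_zero_norm' hbd (tendsto_const_div_atTop_nhds_zero_nat 1)
    have h1 := h0.add_const (x + (ε : ℝ))
    rw [zero_add] at h1
    apply h1.congr
    intro n
    ring
  have hwin := window_tendsto h ck (x - (ε : ℝ)) (x + (ε : ℝ)) hp hm Aa Bb hAten hBten
    (by linarith)
  have hμeq : (μ {ω' : Ω | f ω' ≤ (k : ℝ)}).toReal = ck := by
    rw [hck]
    congr 1
    apply measure_congr
    filter_upwards [hff'] with ω' hw
    have : (ω' ∈ {ω' : Ω | f ω' ≤ (k : ℝ)}) = (ω' ∈ s k) := by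
      simp only [Set.mem_setOf_eq, hsdef, hw]
    exact this
  rw [hμeq]
  have hmain := hwin.const_mul (1 / (2 * (ε : ℝ)))
  have hconst : (1 / (2 * (ε : ℝ))) * (ck * ((x + (ε : ℝ)) - (x - (ε : ℝ)))) = ck := by
    have e : (x + (ε : ℝ)) - (x - (ε : ℝ)) = 2 * (ε : ℝ) := by ring
    rw [e, one_div, mul_comm ck (2 * (ε : ℝ)), ← mul_assoc,
      inv_mul_cancel₀ (by positivity : (2 * (ε : ℝ)) ≠ 0), one_mul]
  rw [hconst] at hmain
  apply hmain.congr'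
  filter_upwards [eventually_ge_atTop 1] with n hn
  have hnpos : (0 : ℝ) < n := by exact_mod_cast hn
  have hne : (n : ℝ) ≠ 0 := ne_of_gt hnpos
  have hseteq : {i : ℤ | |(i : ℝ) / (n : ℝ) - x| < (ε : ℝ) ∧ f (τ i ω) ≤ (k : ℝ)}
      = ↑((Finset.Ico (Aa n) (Bb n)).filter (fun i => f' (τ i ω) ≤ (k : ℝ))) := by
    ext i
    simp only [Finset.coe_filter, Finset.mem_Ico, Set.mem_setOf_eq]
    rw [hcomp i, abs_sub_lt_iff]
    constructor
    · rintro ⟨⟨ha1, ha2⟩, hfk⟩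
      refine ⟨⟨?_, ?_⟩, hfk⟩
      · have h3 : (n : ℝ) * (x - ε) < i := by
          have h4 : x - (ε : ℝ) < (i : ℝ) / n := by linarith
          calc (n : ℝ) * (x - ε) < n * ((i : ℝ) / n) := (mul_lt_mul_iff_right₀ hnpos).2 h4
            _ = i := by field_simp
        have hfl : ⌊(n : ℝ) * (x - ε)⌋ < i := Int.floor_lt.2 h3
        show ⌊(n : ℝ) * (x - (ε : ℝ))⌋ + 1 ≤ i
        omega
      · have h3 : (i : ℝ) < (n : ℝ) * (x + ε) := by
          have h4 : (i : ℝ) / n < x + (ε : ℝ) := by linarith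
          calc (i : ℝ) = n * ((i : ℝ) / n) := by field_simp
            _ < n * (x + ε) := (mul_lt_mul_iff_right₀ hnpos).2 h4
        rw [hBbdef]
        exact Int.lt_ceil.2 h3
    · rintro ⟨⟨h1, h2⟩, hfk⟩
      have hfl : ⌊(n : ℝ) * (x - ε)⌋ < i := by
        have h1' : ⌊(n : ℝ) * (x - (ε : ℝ))⌋ + 1 ≤ i := h1
        omega
      have h3 : (n : ℝ) * (x - ε) < i := Int.floor_lt.1 hfl
      have h4 : (i : ℝ) < (n : ℝ) * (x + ε) := by
        rw [hBbdef] at h2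
        exact Int.lt_ceil.1 h2
      have h5 : x - (ε : ℝ) < (i : ℝ) / n := by
        rw [lt_div_iff₀ hnpos]
        calc (x - (ε : ℝ)) * n = n * (x - ε) := by ring
          _ < i := h3
      have h6 : (i : ℝ) / n < x + (ε : ℝ) := by
        rw [div_lt_iff₀ hnpos]
        calc (i : ℝ) < n * (x + ε) := h4
          _ = (x + (ε : ℝ)) * n := by ring
      exact ⟨⟨by linarith, by linarith⟩, hfk⟩
  rw [hseteq, Nat.card_coe_set_eq, Set.ncard_coe_finset]
  have hcard : (((Finset.Ico (Aa n) (Bb n)).filter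
      (fun i => f' (τ i ω) ≤ (k : ℝ))).card : ℝ)
      = ∑ i ∈ Finset.Ico (Aa n) (Bb n), h i := by
    rw [Finset.card_filter]
    push_cast
    apply Finset.sum_congr rfl
    intro i _
    rw [hhdef]
    simp only [hGdef, Set.indicator_apply]
    have hmem : (τ i ω ∈ s k) = (f' (τ i ω) ≤ (k : ℝ)) := by
      simp only [hsdef, Set.mem_setOf_eq]
    by_cases hc : f' (τ i ω) ≤ (k : ℝ)
    · rw [if_pos hc, if_pos (by rw [hmem]; exact hc)]
    · rw [if_neg hc, if_neg (by rw [hmem]; exact hc)]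
  rw [hcard]
  field_simp
end
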